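/- Let a > 0 be a real number and let R₁ be the Litim regulator at scale k = 1. Then ∫_{ℝ} dω / (ω² + a + R₁(ω))³ = (1/4)·( 8/(1 + a)³ − (3 + 5a)/(a²·(1 + a)²) + 3·arctan(√a)/a^{5/2} ). -/

import Mathlib

/-!
Off `[-1, 1]` the regulator vanishes, so the integrand is `(ω² + a)⁻³`; on `[-1, 1]` it is the
constant `(1 + a)⁻³`. The integral is therefore the full-line integral of `(ω² + a)⁻³` plus
`∫_{-1}^{1} ((1 + a)⁻³ - (ω² + a)⁻³)`, and both are evaluated with the explicit antiderivative
`primitiveInvSqAddCube`, whose limits at `±∞` come from those of `arctan`.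
-/

open MeasureTheory Real

/-- The Litim regulator at scale `k`: `R_k(ω) = (k² − ω²)·θ(k² − ω²)`. -/
noncomputable def litim (k ω : ℝ) : ℝ := if ω ^ 2 < k ^ 2 then k ^ 2 - ω ^ 2 else 0

open Set Filter Topology

theorem litim_eq_max (k ω : ℝ) : litim k ω = max (k ^ 2 - ω ^ 2) 0 := by
  unfold litim
  split_ifs with h
  · exact (max_eq_left (by linarith)).symm
  · exact (max_eq_right (by linarith)).symm

theorem litim_nonneg (k ω : ℝ) : 0 ≤ litim k ω := by
  rw [litim_eq_max]; exact le_max_right _ _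

@[fun_prop]
theorem continuous_litim (k : ℝ) : Continuous (litim k) := by
  simp only [funext (litim_eq_max k)]; fun_prop

theorem litim_eq_zero_of_sq_le {k ω : ℝ} (h : k ^ 2 ≤ ω ^ 2) : litim k ω = 0 := by
  rw [litim_eq_max]; exact max_eq_right (by linarith)

theorem sq_add_litim_of_sq_le {k ω : ℝ} (h : ω ^ 2 ≤ k ^ 2) : ω ^ 2 + litim k ω = k ^ 2 := by
  rw [litim_eq_max, max_eq_left (by linarith)]; ring

theorem integral_eq_integral_add_intervalIntegral_sub {E : Type*} [NormedAddCommGroup E]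
    [NormedSpace ℝ E] {f g : ℝ → E} {a b : ℝ} (hab : a ≤ b) (hf : Integrable f)
    (hg : Integrable g) (hfg : ∀ x ∉ Ioc a b, f x = g x) :
    ∫ x, f x = (∫ x, g x) + ∫ x in a..b, f x - g x := by
  rw [intervalIntegral.integral_of_le hab,
    setIntegral_eq_integral_of_forall_compl_eq_zero fun x hx => sub_eq_zero.2 (hfg x hx),
    integral_sub hf hg, add_sub_cancel]

theorem tendsto_div_sq_add_atTop {a : ℝ} (ha : 0 ≤ a) :
    Tendsto (fun x : ℝ => x / (x ^ 2 + a)) atTop (𝓝 0) := by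
  refine squeeze_zero' ?_ ?_ tendsto_inv_atTop_zero
  · filter_upwards [eventually_ge_atTop 0] with x hx
    positivity
  · filter_upwards [eventually_gt_atTop 0] with x hx
    rw [div_le_iff₀ (by positivity)]
    field_simp
    nlinarith

noncomputable def primitiveInvSqAddCube (a x : ℝ) : ℝ :=
  x / (x ^ 2 + a) * (1 / (4 * a * (x ^ 2 + a)) + 3 / (8 * a ^ 2))
    + 3 / (8 * a ^ 2 * √a) * arctan (x / √a)

section

variable {a : ℝ}

theorem primitiveInvSqAddCube_neg (x : ℝ) :
    primitiveInvSqAddCube a (-x) = -primitiveInvSqAddCube a x := by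
  simp only [primitiveInvSqAddCube, neg_div, arctan_neg, even_two, Even.neg_pow]
  ring

theorem tendsto_primitiveInvSqAddCube_atTop (ha : 0 < a) :
    Tendsto (primitiveInvSqAddCube a) atTop (𝓝 (3 * π / (16 * a ^ 2 * √a))) := by
  have hsq : Tendsto (fun x : ℝ => x ^ 2 + a) atTop atTop :=
    tendsto_atTop_add_const_right _ _ (tendsto_pow_atTop two_ne_zero)
  have hrat := (tendsto_div_sq_add_atTop ha.le).mul
    (((hsq.const_mul_atTop (by positivity : 0 < 4 * a)).inv_tendsto_atTop.add_const
      (3 / (8 * a ^ 2))))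
  have harctan := (tendsto_arctan_atTop.mono_right nhdsWithin_le_nhds).comp
    (tendsto_id.atTop_div_const (sqrt_pos.2 ha))
  convert hrat.add (harctan.const_mul (3 / (8 * a ^ 2 * √a))) using 2
  · simp [primitiveInvSqAddCube]
  · ring

theorem hasDerivAt_primitiveInvSqAddCube (ha : 0 < a) (x : ℝ) :
    HasDerivAt (primitiveInvSqAddCube a) (1 / (x ^ 2 + a) ^ 3) x := by
  have hpos : 0 < x ^ 2 + a := by positivity
  have hq : HasDerivAt (fun x : ℝ => x ^ 2 + a) (2 * x) x := by
    simpa using (hasDerivAt_pow 2 x).add_const a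
  have hrat := ((hasDerivAt_id' x).fun_div hq hpos.ne').fun_mul
    ((((hasDerivAt_const x 1).fun_div (hq.const_mul (4 * a)) (by positivity))).add_const (3 / (8 * a ^ 2)))
  have harctan := ((hasDerivAt_id' x).div_const √a).arctan.const_mul (3 / (8 * a ^ 2 * √a))
  refine (hrat.add harctan).congr_deriv ?_
  field_simp
  rw [sq_sqrt ha.le]
  ring

theorem primitiveInvSqAddCube_one (ha : 0 < a) :
    primitiveInvSqAddCube a 1 = 3 * π / (16 * a ^ 2 * √a)
      + (3 + 5 * a) / (8 * a ^ 2 * (1 + a) ^ 2) - 3 * arctan √a / (8 * √a ^ 5) := by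
  have harctan : arctan (1 / √a) = π / 2 - arctan √a := by
    rw [one_div, arctan_inv_of_pos (sqrt_pos.2 ha)]
  have hpow : √a ^ 5 = a ^ 2 * √a := by
    rw [show 5 = 2 * 2 + 1 by rfl, pow_succ, pow_mul, sq_sqrt ha.le]
  simp only [primitiveInvSqAddCube, one_pow, harctan, hpow]
  field_simp
  ring

theorem integrable_inv_sq_add_pow_three (ha : 0 < a) :
    Integrable fun x : ℝ => 1 / (x ^ 2 + a) ^ 3 := by
  refine (integrable_inv_one_add_sq.const_mul ((1 + a) / a ^ 3)).mono'
    (continuous_const.div (by fun_prop) fun x => by positivity).aestronglyMeasurable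
    (Eventually.of_forall fun x => ?_)
  rw [norm_of_nonneg (by positivity), ← div_eq_mul_inv, div_div,
    div_le_div_iff₀ (by positivity) (by positivity)]
  have key : (1 + a) * (x ^ 2 + a) ^ 3 - a ^ 3 * (1 + x ^ 2) = (1 + a) * (x ^ 2) ^ 3
      + 3 * a * (1 + a) * (x ^ 2) ^ 2 + (3 * a ^ 2 + 2 * a ^ 3) * x ^ 2 + a ^ 4 := by ring
  linarith [key, (by positivity : 0 ≤ (1 + a) * (x ^ 2) ^ 3
      + 3 * a * (1 + a) * (x ^ 2) ^ 2 + (3 * a ^ 2 + 2 * a ^ 3) * x ^ 2 + a ^ 4)]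

theorem tendsto_primitiveInvSqAddCube_atBot (ha : 0 < a) :
    Tendsto (primitiveInvSqAddCube a) atBot (𝓝 (-(3 * π / (16 * a ^ 2 * √a)))) := by
  refine ((tendsto_primitiveInvSqAddCube_atTop ha).comp tendsto_neg_atBot_atTop).neg.congr
    fun x => ?_
  simp [primitiveInvSqAddCube_neg]

theorem integral_inv_sq_add_pow_three (ha : 0 < a) :
    ∫ x : ℝ, 1 / (x ^ 2 + a) ^ 3 = 3 * π / (8 * a ^ 2 * √a) := by
  rw [integral_of_hasDerivAt_of_tendsto (hasDerivAt_primitiveInvSqAddCube ha)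
    (integrable_inv_sq_add_pow_three ha) (tendsto_primitiveInvSqAddCube_atBot ha)
    (tendsto_primitiveInvSqAddCube_atTop ha)]
  ring

theorem integrable_inv_sq_add_add_litim_pow_three (ha : 0 < a) (k : ℝ) :
    Integrable fun ω : ℝ => 1 / (ω ^ 2 + a + litim k ω) ^ 3 := by
  have hden : ∀ ω, 0 < ω ^ 2 + a + litim k ω := fun ω => by
    have := litim_nonneg k ω
    positivity
  refine (integrable_inv_sq_add_pow_three ha).mono'
    (continuous_const.div (by fun_prop) fun ω => (pow_pos (hden ω) 3).ne').aestronglyMeasurable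
    (Eventually.of_forall fun ω => ?_)
  rw [norm_of_nonneg (one_div_nonneg.2 (pow_pos (hden ω) 3).le)]
  exact one_div_le_one_div_of_le (by positivity)
    (pow_le_pow_left₀ (by positivity) (le_add_of_nonneg_right (litim_nonneg k ω)) 3)

end

theorem integral_litim_propagator_cube (a : ℝ) (ha : 0 < a) :
    ∫ ω : ℝ, 1 / (ω ^ 2 + a + litim 1 ω) ^ 3 =
      (1 / 4) * (8 / (1 + a) ^ 3 - (3 + 5 * a) / (a ^ 2 * (1 + a) ^ 2)
        + 3 * arctan (Real.sqrt a) / Real.sqrt a ^ 5) := by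
  have houter : ∀ ω ∉ Ioc (-1 : ℝ) 1,
      1 / (ω ^ 2 + a + litim 1 ω) ^ 3 = 1 / (ω ^ 2 + a) ^ 3 := fun ω hω => by
    rw [litim_eq_zero_of_sq_le, add_zero]
    rw [mem_Ioc, not_and_or, not_lt, not_le] at hω
    rcases hω with h | h <;> nlinarith
  have hinner : EqOn (fun ω => 1 / (ω ^ 2 + a + litim 1 ω) ^ 3 - 1 / (ω ^ 2 + a) ^ 3)
      (fun ω => 1 / (1 + a) ^ 3 - 1 / (ω ^ 2 + a) ^ 3) (uIcc (-1) 1) := fun ω hω => by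
    rw [uIcc_of_le (by norm_num), mem_Icc] at hω
    simp only [add_right_comm _ a, sq_add_litim_of_sq_le (by nlinarith : ω ^ 2 ≤ 1 ^ 2), one_pow]
  rw [integral_eq_integral_add_intervalIntegral_sub (by norm_num)
      (integrable_inv_sq_add_add_litim_pow_three ha 1) (integrable_inv_sq_add_pow_three ha) houter,
    integral_inv_sq_add_pow_three ha, intervalIntegral.integral_congr hinner,
    intervalIntegral.integral_sub intervalIntegrable_const
      ((integrable_inv_sq_add_pow_three ha).intervalIntegrable),
    intervalIntegral.integral_const,
    intervalIntegral.integral_eq_sub_of_hasDerivAt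
      (fun x _ => hasDerivAt_primitiveInvSqAddCube ha x)
      ((integrable_inv_sq_add_pow_three ha).intervalIntegrable),
    primitiveInvSqAddCube_neg, primitiveInvSqAddCube_one ha, smul_eq_mul]
  field_simp
  ring
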